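/- arXiv:2601.17994 — 3 statements merged into one kernel-verified Lean document; each statement's English description precedes it below -/
import Mathlib

section
/- Let A, B be nonzero integers. If f(x) = x^6 + A x^4 + B is irreducible over ℚ, then the cubic ĥ(x) = x^3 + A B x - B^2 has no rational root, hence is irreducible over ℚ. -/
open Polynomial

theorem stmt_2 (A B : ℤ) (hA : A ≠ 0) (hB : B ≠ 0)
    (hf : Irreducible (X ^ 6 + C (A : ℚ) * X ^ 4 + C (B : ℚ) : ℚ[X])) :
    (∀ q : ℚ, q ^ 3 + (A : ℚ) * (B : ℚ) * q - (B : ℚ) ^ 2 ≠ 0) ∧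
    Irreducible (X ^ 3 + C ((A : ℚ) * (B : ℚ)) * X - C ((B : ℚ) ^ 2) : ℚ[X]) := by
  have hBQ : (B : ℚ) ≠ 0 := Int.cast_ne_zero.mpr hB
  have hroot : ∀ q : ℚ, q ^ 3 + (A : ℚ) * (B : ℚ) * q - (B : ℚ) ^ 2 ≠ 0 := by
    intro q hq
    have hq0 : q ≠ 0 := by
      rintro rfl
      apply hBQ
      have : (B : ℚ) ^ 2 = 0 := by linarith [hq]; 
      exact pow_eq_zero_iff (n := 2) (by norm_num) |>.mp this
    set r : ℚ := -(B : ℚ) / q with hr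
    have hgr : r ^ 3 + (A : ℚ) * r ^ 2 + (B : ℚ) = 0 := by
      rw [hr]
      field_simp
      have : (B:ℚ) * (q ^ 3 + (A : ℚ) * (B : ℚ) * q - (B : ℚ) ^ 2) = 0 := by rw [hq]; ring
      nlinarith [this]
    have hfact : (X ^ 6 + C (A : ℚ) * X ^ 4 + C (B : ℚ) : ℚ[X]) =
        (X ^ 2 - C r) * (X ^ 4 + C ((A:ℚ) + r) * X ^ 2 + C (r ^ 2 + (A:ℚ) * r)) := by
      have hB' : (B : ℚ) = -r ^ 3 - (A:ℚ) * r ^ 2 := by linarith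
      rw [hB']
      simp only [map_sub, map_add, map_mul, map_neg, map_pow]
      ring
    rcases hf.isUnit_or_isUnit hfact with h | h
    · have : (X ^ 2 - C r : ℚ[X]).natDegree = 2 := natDegree_X_pow_sub_C
      exact (Polynomial.not_isUnit_of_natDegree_pos _ (by omega)) h
    · have hd : (X ^ 4 + C ((A:ℚ) + r) * X ^ 2 + C (r ^ 2 + (A:ℚ) * r) : ℚ[X]).natDegree = 4 := by
        compute_degree!
      exact (Polynomial.not_isUnit_of_natDegree_pos _ (by omega)) h
  refine ⟨hroot, ?_⟩
  have hd3 : (X ^ 3 + C ((A : ℚ) * (B : ℚ)) * X - C ((B : ℚ) ^ 2) : ℚ[X]).natDegree = 3 := by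
    compute_degree!
  rw [irreducible_iff_roots_eq_zero_of_degree_le_three (by omega) (by omega)]
  rw [Multiset.eq_zero_iff_forall_notMem]
  intro q hq
  rw [mem_roots, IsRoot.def] at hq
  · apply hroot q
    simpa using hq
  · intro h0
    rw [h0] at hd3
    simp at hd3
end

section
/- Let A, B be integers with A B ≠ 0 and let k ∈ {1, 2}. The discriminant of the trinomial f(x) = x^6 + A x^{2k} + B equals -64 · B^{2k-1} · (4A^3 + 27B^{3-k})^2. -/
open Polynomial Finset

theorem aux1 (r : Fin 6 → ℂ) :
    ∏ p ∈ Finset.univ.filter (fun p : Fin 6 × Fin 6 => p.1 < p.2), (r p.1 - r p.2) ^ 2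
      = - ∏ i : Fin 6, ∏ j ∈ Finset.univ.erase i, (r i - r j) := by
  have h1 : ∏ i : Fin 6, ∏ j ∈ Finset.univ.erase i, (r i - r j)
      = ∏ p ∈ (Finset.univ : Finset (Fin 6 × Fin 6)).filter (fun p => p.1 ≠ p.2), (r p.1 - r p.2) := by
    rw [Finset.prod_filter, Fintype.prod_prod_type]
    refine Finset.prod_congr rfl fun i _ => ?_
    rw [← Finset.prod_filter]
    apply Finset.prod_congr _ (fun j _ => rfl)
    ext j
    simp [eq_comm, ne_comm]
  have h2 : (Finset.univ : Finset (Fin 6 × Fin 6)).filter (fun p => p.1 ≠ p.2)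
      = (Finset.univ.filter (fun p : Fin 6 × Fin 6 => p.1 < p.2)) ∪
        (Finset.univ.filter (fun p : Fin 6 × Fin 6 => p.2 < p.1)) := by
    ext p
    simp only [Finset.mem_filter, Finset.mem_union, Finset.mem_univ, true_and]
    constructor
    · exact fun h => h.lt_or_gt
    · rintro (h | h)
      · exact ne_of_lt h
      · exact ne_of_gt h
  have hdisj : Disjoint (Finset.univ.filter (fun p : Fin 6 × Fin 6 => p.1 < p.2))
      (Finset.univ.filter (fun p : Fin 6 × Fin 6 => p.2 < p.1)) := by
    rw [Finset.disjoint_filter]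
    intro p _ ha hb
    exact absurd (ha.trans hb) (lt_irrefl _)
  have h3 : ∏ p ∈ Finset.univ.filter (fun p : Fin 6 × Fin 6 => p.2 < p.1), (r p.1 - r p.2)
      = ∏ p ∈ Finset.univ.filter (fun p : Fin 6 × Fin 6 => p.1 < p.2), (r p.2 - r p.1) := by
    apply Finset.prod_nbij' (fun p => Prod.swap p) (fun p => Prod.swap p) <;> simp
  have h4 : ∀ p : Fin 6 × Fin 6, (r p.1 - r p.2) * (r p.2 - r p.1) = (-1) * (r p.1 - r p.2)^2 := by
    intro p; ring
  have hcard : (Finset.univ.filter (fun p : Fin 6 × Fin 6 => p.1 < p.2)).card = 15 := by decide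
  rw [h1, h2, Finset.prod_union hdisj, h3, ← Finset.prod_mul_distrib,
    Finset.prod_congr rfl (fun p _ => h4 p), Finset.prod_mul_distrib,
    Finset.prod_const, hcard]
  ring

theorem aux2 {n : ℕ} (r : Fin n → ℂ) (i : Fin n) :
    eval (r i) (derivative (∏ j : Fin n, (X - C (r j)))) =
      ∏ j ∈ Finset.univ.erase i, (r i - r j) := by
  rw [Finset.prod_eq_multiset_prod, derivative_prod, ← Finset.sum_eq_multiset_sum,
    eval_finset_sum, Finset.sum_eq_single i]
  · rw [derivative_X_sub_C, mul_one, ← Finset.erase_val, ← Finset.prod_eq_multiset_prod,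
      eval_prod]
    exact Finset.prod_congr rfl (by simp)
  · intro m _ hmi
    rw [eval_mul]
    apply mul_eq_zero_of_left
    rw [eval_multiset_prod, Multiset.map_map]
    apply Multiset.prod_eq_zero
    simp only [Multiset.mem_map]
    refine ⟨i, ?_, by simp⟩
    rw [Multiset.mem_erase_of_ne (Ne.symm hmi)]
    simp
  · simp

theorem aux3 (r : Fin 6 → ℂ) (s : ℂ) : ∏ i : Fin 6, (r i - s) = ∏ i : Fin 6, (s - r i) := by
  have : ∀ i : Fin 6, r i - s = (-1) * (s - r i) := fun i => by ring
  rw [Finset.prod_congr rfl (fun i _ => this i), Finset.prod_mul_distrib, Finset.prod_const]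
  norm_num

/-- The discriminant of the monic sextic trinomial `x^6 + A x^(2k) + B`
(expressed via its complex roots, where for a monic polynomial the
discriminant is `∏_{i<j} (rᵢ - rⱼ)^2`) equals `-64 B^(2k-1) (4A^3 + 27B^(3-k))^2`. -/
theorem stmt_4 (A B : ℤ) (hA : A ≠ 0) (hB : B ≠ 0) (k : ℕ) (hk : k = 1 ∨ k = 2)
    (r : Fin 6 → ℂ)
    (hroots : (X ^ 6 + C (A : ℂ) * X ^ (2 * k) + C (B : ℂ) : ℂ[X]) =
      ∏ i : Fin 6, (X - C (r i))) :
    ∏ p ∈ Finset.univ.filter (fun p : Fin 6 × Fin 6 => p.1 < p.2),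
        (r p.1 - r p.2) ^ 2 =
      -64 * (B : ℂ) ^ (2 * k - 1) * (4 * (A : ℂ) ^ 3 + 27 * (B : ℂ) ^ (3 - k)) ^ 2 := by
  have hA' : (A : ℂ) ≠ 0 := Int.cast_ne_zero.mpr hA
  have hB' : (B : ℂ) ≠ 0 := Int.cast_ne_zero.mpr hB
  have heval : ∀ z : ℂ, z ^ 6 + (A:ℂ) * z ^ (2*k) + B = ∏ i : Fin 6, (z - r i) := by
    intro z
    have := congrArg (eval z) hroots
    simpa [eval_prod] using this
  have hd : ∀ i, ∏ j ∈ Finset.univ.erase i, (r i - r j)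
      = eval (r i) (derivative ((X:ℂ[X]) ^ 6 + C (A:ℂ) * X ^ (2*k) + C (B:ℂ))) := by
    intro i
    rw [hroots, aux2]
  rw [aux1, Finset.prod_congr rfl (fun i _ => hd i)]
  -- product of all roots equals B
  have hprodr : ∏ i : Fin 6, r i = (B : ℂ) := by
    have h0 := heval 0
    have hzero : (0:ℂ) ^ (2*k) = 0 := by
      rcases hk with rfl | rfl <;> norm_num
    rw [hzero, ← aux3 r 0] at h0
    simp only [sub_zero] at h0
    rw [← h0]
    norm_num
  have expand : ∀ (c : ℂ) (f g : Fin 6 → ℂ), ∏ i : Fin 6, (c * (f i * g i))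
      = c ^ 6 * ((∏ i : Fin 6, f i) * ∏ i : Fin 6, g i) := by
    intro c f g
    rw [Finset.prod_mul_distrib, Finset.prod_mul_distrib, Finset.prod_const, Finset.card_univ,
      Fintype.card_fin]
  have hps : ∀ s : ℂ, ∏ i : Fin 6, (r i - s) = s ^ 6 + (A:ℂ) * s ^ (2*k) + B := by
    intro s
    rw [aux3, ← heval s]
  have hpns : ∀ s : ℂ, ∏ i : Fin 6, (r i + s) = (-s) ^ 6 + (A:ℂ) * (-s) ^ (2*k) + B := by
    intro s
    have : ∀ i : Fin 6, r i + s = r i - (-s) := fun i => by ring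
    rw [Finset.prod_congr rfl (fun i _ => this i), aux3, ← heval (-s)]
  rcases hk with rfl | rfl
  · -- k = 1
    have hdval : ∀ i : Fin 6, eval (r i) (derivative ((X:ℂ[X]) ^ 6 + C (A:ℂ) * X ^ (2*1) + C (B:ℂ)))
        = 6 * (r i) ^ 5 + 2 * (A:ℂ) * (r i) := by
      intro i; simp; ring
    rw [Finset.prod_congr rfl (fun i _ => hdval i)]
    have hr : ∀ i : Fin 6, (r i) ^ 6 + (A:ℂ) * (r i) ^ (2*1) + B = 0 := by
      intro i
      rw [heval (r i)]
      exact Finset.prod_eq_zero (Finset.mem_univ i) (by simp)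
    obtain ⟨s, hs⟩ : ∃ s : ℂ, s ^ 2 = -3 * B / (2 * A) :=
      IsAlgClosed.exists_pow_nat_eq _ two_pos
    have hs' : 2 * (A:ℂ) * s ^ 2 + 3 * B = 0 := by
      rw [hs]; field_simp; ring
    have key : ∀ i : Fin 6, r i * (6 * (r i) ^ 5 + 2 * (A:ℂ) * (r i))
        = (-4 * A) * ((r i - s) * (r i + s)) := by
      intro i
      linear_combination 6 * (hr i) - 2 * hs'
    have hfs : s ^ 6 + (A:ℂ) * s ^ (2*1) + B = -((B:ℂ) * (4*A^3 + 27*B^2)) / (8 * A^3) := by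
      have h2 : s ^ 6 = (s ^ 2) ^ 3 := by ring
      have h3 : s ^ (2*1) = s ^ 2 := by norm_num
      rw [h2, h3, hs]; field_simp; ring
    have hfns : (-s) ^ 6 + (A:ℂ) * (-s) ^ (2*1) + B = -((B:ℂ) * (4*A^3 + 27*B^2)) / (8 * A^3) := by
      rw [← hfs]; ring
    have main : (B:ℂ) * ∏ i : Fin 6, (6 * (r i) ^ 5 + 2 * (A:ℂ) * (r i))
        = (B:ℂ) * (64 * B * (4*A^3 + 27*B^2) ^ 2) := by
      calc (B:ℂ) * ∏ i : Fin 6, (6 * (r i) ^ 5 + 2 * (A:ℂ) * (r i))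
          = (∏ i : Fin 6, r i) * ∏ i : Fin 6, (6 * (r i) ^ 5 + 2 * (A:ℂ) * (r i)) := by
            rw [hprodr]
        _ = ∏ i : Fin 6, (r i * (6 * (r i) ^ 5 + 2 * (A:ℂ) * (r i))) := by
            rw [Finset.prod_mul_distrib]
        _ = ∏ i : Fin 6, ((-4 * (A:ℂ)) * ((r i - s) * (r i + s))) := by
            exact Finset.prod_congr rfl (fun i _ => key i)
        _ = (-4 * (A:ℂ)) ^ 6 * ((∏ i : Fin 6, (r i - s)) * ∏ i : Fin 6, (r i + s)) :=
            expand _ _ _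
        _ = (B:ℂ) * (64 * B * (4*A^3 + 27*B^2) ^ 2) := by
            rw [hps s, hpns s, hfs, hfns]
            field_simp
            ring
    have hD := mul_left_cancel₀ hB' main
    rw [hD]
    norm_num
  · -- k = 2
    have hdval : ∀ i : Fin 6, eval (r i) (derivative ((X:ℂ[X]) ^ 6 + C (A:ℂ) * X ^ (2*2) + C (B:ℂ)))
        = 6 * (r i) ^ 5 + 4 * (A:ℂ) * (r i) ^ 3 := by
      intro i; simp; ring
    rw [Finset.prod_congr rfl (fun i _ => hdval i)]
    obtain ⟨s, hs⟩ : ∃ s : ℂ, s ^ 2 = -2 * A / 3 :=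
      IsAlgClosed.exists_pow_nat_eq _ two_pos
    have hs' : 3 * s ^ 2 + 2 * (A:ℂ) = 0 := by
      rw [hs]; field_simp; ring
    have key : ∀ i : Fin 6, 6 * (r i) ^ 5 + 4 * (A:ℂ) * (r i) ^ 3
        = 6 * ((r i) ^ 3 * ((r i - s) * (r i + s))) := by
      intro i
      linear_combination 2 * (r i) ^ 3 * hs'
    have hfs : s ^ 6 + (A:ℂ) * s ^ (2*2) + B = (4*(A:ℂ)^3 + 27*B) / 27 := by
      have h2 : s ^ 6 = (s ^ 2) ^ 3 := by ring
      have h3 : s ^ (2*2) = (s ^ 2) ^ 2 := by ring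
      rw [h2, h3, hs]; field_simp; ring
    have hfns : (-s) ^ 6 + (A:ℂ) * (-s) ^ (2*2) + B = (4*(A:ℂ)^3 + 27*B) / 27 := by
      rw [← hfs]; ring
    have main : ∏ i : Fin 6, (6 * (r i) ^ 5 + 4 * (A:ℂ) * (r i) ^ 3)
        = 64 * (B:ℂ) ^ 3 * (4*(A:ℂ)^3 + 27*(B:ℂ)) ^ 2 := by
      calc ∏ i : Fin 6, (6 * (r i) ^ 5 + 4 * (A:ℂ) * (r i) ^ 3)
          = ∏ i : Fin 6, (6 * ((r i) ^ 3 * ((r i - s) * (r i + s)))) := by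
            exact Finset.prod_congr rfl (fun i _ => key i)
        _ = 6 ^ 6 * ((∏ i : Fin 6, (r i) ^ 3) * ((∏ i : Fin 6, (r i - s)) * ∏ i : Fin 6, (r i + s))) := by
            rw [expand 6 (fun i => (r i) ^ 3) (fun i => (r i - s) * (r i + s)),
              Finset.prod_mul_distrib]
        _ = 6 ^ 6 * ((∏ i : Fin 6, r i) ^ 3 * ((∏ i : Fin 6, (r i - s)) * ∏ i : Fin 6, (r i + s))) := by
            rw [Finset.prod_pow]
        _ = 64 * (B:ℂ) ^ 3 * (4*(A:ℂ)^3 + 27*(B:ℂ)) ^ 2 := by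
            rw [hprodr, hps s, hpns s, hfs, hfns]
            field_simp
            ring
    rw [main]
    norm_num
end

section
/- The polynomial x^6 - 3x^2 - 1 is irreducible over ℚ. -/
open Polynomial

private lemma q_irred : Irreducible (X^3 + X + 1 : (ZMod 2)[X]) := by
  have h : (X^3 + X + 1 : (ZMod 2)[X]).natDegree = 3 := by compute_degree!
  rw [irreducible_iff_roots_eq_zero_of_degree_le_three (by omega) (by omega)]
  have hne : (X^3 + X + 1 : (ZMod 2)[X]) ≠ 0 := by
    intro h0; rw [h0] at h; simp at h
  rw [Multiset.eq_zero_iff_forall_notMem]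
  intro r hr
  rw [mem_roots hne, IsRoot] at hr
  simp at hr
  fin_cases r <;> revert hr <;> decide

private lemma G_mod2 : ((X^6 - C 3 * X^2 - C 1 : ℤ[X]).map (Int.castRingHom (ZMod 2)))
    = (X^3 + X + 1 : (ZMod 2)[X])^2 := by
  have h2 : (2 : (ZMod 2)[X]) = 0 := by
    rw [show (2:(ZMod 2)[X]) = ((2:ℕ):(ZMod 2)[X]) by norm_cast, ← Polynomial.C_eq_natCast]
    norm_num
    decide
  simp only [Polynomial.map_sub, Polynomial.map_mul, Polynomial.map_pow, map_X, map_C]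
  rw [show (Int.castRingHom (ZMod 2)) 3 = 1 by decide, show (Int.castRingHom (ZMod 2)) 1 = 1 by decide, map_one]
  linear_combination (-X^4 - X^3 - X^2 - X - 1) * h2

private lemma G_monic : (X^6 - C 3 * X^2 - C 1 : ℤ[X]).Monic := by
  monicity!

private lemma G_natDegree : (X^6 - C 3 * X^2 - C 1 : ℤ[X]).natDegree = 6 := by
  compute_degree!

private lemma no_cubic (g h : ℤ[X]) (hg : g.Monic) (hh : h.Monic)
    (hF : (X^6 - C 3 * X^2 - C 1 : ℤ[X]) = g * h)
    (hg3 : g.natDegree = 3) (hh3 : h.natDegree = 3) : False := by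
  have hgc3 : g.coeff 3 = 1 := by have := hg.coeff_natDegree; rwa [hg3] at this
  have hhc3 : h.coeff 3 = 1 := by have := hh.coeff_natDegree; rwa [hh3] at this
  have hgc4 : g.coeff 4 = 0 := coeff_eq_zero_of_natDegree_lt (by omega)
  have hgc5 : g.coeff 5 = 0 := coeff_eq_zero_of_natDegree_lt (by omega)
  have hgc6 : g.coeff 6 = 0 := coeff_eq_zero_of_natDegree_lt (by omega)
  have hhc4 : h.coeff 4 = 0 := coeff_eq_zero_of_natDegree_lt (by omega)
  have hhc5 : h.coeff 5 = 0 := coeff_eq_zero_of_natDegree_lt (by omega)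
  have hhc6 : h.coeff 6 = 0 := coeff_eq_zero_of_natDegree_lt (by omega)
  have e0 := congrArg (fun p : ℤ[X] => p.coeff 0) hF
  have e1 := congrArg (fun p : ℤ[X] => p.coeff 1) hF
  have e2 := congrArg (fun p : ℤ[X] => p.coeff 2) hF
  have e4 := congrArg (fun p : ℤ[X] => p.coeff 4) hF
  have e5 := congrArg (fun p : ℤ[X] => p.coeff 5) hF
  simp only [coeff_mul, Finset.Nat.sum_antidiagonal_eq_sum_range_succ_mk,
    Finset.sum_range_succ, Finset.sum_range_zero, coeff_sub, coeff_C_mul, coeff_X_pow,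
    coeff_C, hgc3, hgc4, hgc5, hgc6, hhc3, hhc4, hhc5, hhc6] at e0 e1 e2 e4 e5
  norm_num at e0 e1 e2 e4 e5
  -- notation: a = g.coeff 2, b = g.coeff 1, c = g.coeff 0, A,B,D for h
  have hcD : g.coeff 0 * (-(h.coeff 0)) = 1 := by linarith
  have hAa : h.coeff 2 = -(g.coeff 2) := by linarith
  rw [hAa] at e2 e4
  have key2 : (g.coeff 1)*(g.coeff 1) = 2*(g.coeff 2) - 3 ∨
      (g.coeff 1)*(g.coeff 1) = -2*(g.coeff 2) - 3 := by
    rcases Int.mul_eq_one_iff_eq_one_or_neg_one.mp hcD with ⟨hc1, hD1⟩ | ⟨hc1, hD1⟩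
    · have hD1' : h.coeff 0 = -1 := by linarith
      rw [hc1, hD1'] at e1 e2
      have hBb : h.coeff 1 = g.coeff 1 := by linarith
      rw [hBb] at e2
      left; linear_combination -e2
    · have hD1' : h.coeff 0 = 1 := by linarith
      rw [hc1, hD1'] at e1 e2
      have hBb : h.coeff 1 = g.coeff 1 := by linarith
      rw [hBb] at e2
      right; linear_combination -e2
  have h2b : (g.coeff 2)*(g.coeff 2) = 2*(g.coeff 1) := by
    rcases Int.mul_eq_one_iff_eq_one_or_neg_one.mp hcD with ⟨hc1, hD1⟩ | ⟨hc1, hD1⟩ <;>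
    · have hD1' : h.coeff 0 = -1 ∨ h.coeff 0 = 1 := by omega
      have hBb : h.coeff 1 = g.coeff 1 := by
        rcases hD1' with h' | h' <;> rw [hc1, h'] at e1 <;> linarith
      rw [hBb] at e4
      linear_combination e4
  have ha2 : Even ((g.coeff 2)*(g.coeff 2)) := ⟨g.coeff 1, by linarith⟩
  have haev : Even (g.coeff 2) := (Int.even_mul.mp ha2).elim id id
  obtain ⟨k, hk⟩ := haev
  have h2bk : 2*(g.coeff 1) = 4*(k*k) := by
    linear_combination -h2b + (g.coeff 2 + k + k) * hk
  have hbk : g.coeff 1 = 2*(k*k) := by linarith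
  have hbsq : (g.coeff 1)*(g.coeff 1) = 4*((k*k)*(k*k)) := by
    linear_combination (g.coeff 1 + 2*(k*k)) * hbk
  obtain ⟨u, hu⟩ : ∃ u, (k*k)*(k*k) = u := ⟨_, rfl⟩
  rw [hu] at hbsq
  rcases key2 with h' | h' <;> omega

private lemma key (g h : ℤ[X]) (hg : g.Monic) (hh : h.Monic)
    (hF : (X^6 - C 3 * X^2 - C 1 : ℤ[X]) = g * h) : g = 1 ∨ h = 1 := by
  have hq := q_irred
  have hqp : Prime (X^3 + X + 1 : (ZMod 2)[X]) := hq.prime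
  have hqdeg : (X^3 + X + 1 : (ZMod 2)[X]).natDegree = 3 := by compute_degree!
  have hdeg : g.natDegree + h.natDegree = 6 := by
    have := G_natDegree
    rw [hF, natDegree_mul hg.ne_zero hh.ne_zero] at this
    omega
  -- degrees mod 2
  have hdvd : ∀ p : ℤ[X], p.Monic → (∃ q : ℤ[X], (X^6 - C 3 * X^2 - C 1 : ℤ[X]) = p * q) →
      p.natDegree = 0 ∨ p.natDegree = 3 ∨ p.natDegree = 6 := by
    intro p hp ⟨q', hq'⟩
    have hmapdvd : p.map (Int.castRingHom (ZMod 2)) ∣ (X^3 + X + 1 : (ZMod 2)[X])^2 := by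
      rw [← G_mod2, hq', Polynomial.map_mul]
      exact Dvd.intro _ rfl
    obtain ⟨i, hi, u, hu⟩ := (dvd_prime_pow hqp 2).mp hmapdvd
    have hpne : p.map (Int.castRingHom (ZMod 2)) ≠ 0 := (hp.map _).ne_zero
    have hune : (u : (ZMod 2)[X]) ≠ 0 := u.ne_zero
    have hdu : (u : (ZMod 2)[X]).natDegree = 0 := natDegree_eq_zero_of_isUnit u.isUnit
    have : (p.map (Int.castRingHom (ZMod 2))).natDegree + (u : (ZMod 2)[X]).natDegree
        = ((X^3 + X + 1 : (ZMod 2)[X])^i).natDegree := by rw [← natDegree_mul hpne hune, hu]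
    rw [hp.natDegree_map, hdu, natDegree_pow, hqdeg] at this
    interval_cases i <;> omega
  have hgd := hdvd g hg ⟨h, hF⟩
  have hhd := hdvd h hh ⟨g, by rw [hF]; ring⟩
  rcases hgd with hgd | hgd | hgd
  · exact Or.inl (hg.natDegree_eq_zero.mp hgd)
  · rcases hhd with hhd | hhd | hhd
    · exact Or.inr (hh.natDegree_eq_zero.mp hhd)
    · exact absurd (no_cubic g h hg hh hF hgd hhd) (by simp)
    · omega
  · exact Or.inr (hh.natDegree_eq_zero.mp (by omega))

private lemma G_irred : Irreducible (X^6 - C 3 * X^2 - C 1 : ℤ[X]) := by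
  constructor
  · intro hu
    have := natDegree_eq_zero_of_isUnit hu
    rw [G_natDegree] at this
    omega
  · intro g h hF
    have hlead : g.leadingCoeff * h.leadingCoeff = 1 := by
      have := G_monic
      rwa [Monic, hF, leadingCoeff_mul] at this
    rcases Int.mul_eq_one_iff_eq_one_or_neg_one.mp hlead with ⟨hg1, hh1⟩ | ⟨hg1, hh1⟩
    · rcases key g h hg1 hh1 hF with h1 | h1
      · exact Or.inl (h1 ▸ isUnit_one)
      · exact Or.inr (h1 ▸ isUnit_one)
    · have hgm : (-g).Monic := by
        show (-g).leadingCoeff = 1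
        rw [leadingCoeff_neg, hg1, neg_neg]
      have hhm : (-h).Monic := by
        show (-h).leadingCoeff = 1
        rw [leadingCoeff_neg, hh1, neg_neg]
      rcases key (-g) (-h) hgm hhm (by rw [hF]; ring) with h1 | h1
      · left
        have hgeq : g = -1 := by rw [← neg_neg g, h1]
        rw [hgeq]; exact isUnit_one.neg
      · right
        have hheq : h = -1 := by rw [← neg_neg h, h1]
        rw [hheq]; exact isUnit_one.neg

theorem stmt_11 : Irreducible (X ^ 6 - 3 * X ^ 2 - 1 : ℚ[X]) := by
  have hprim : (X^6 - C 3 * X^2 - C 1 : ℤ[X]).IsPrimitive := G_monic.isPrimitive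
  have := (IsPrimitive.Int.irreducible_iff_irreducible_map_cast hprim).mp G_irred
  have hmap : (X^6 - C 3 * X^2 - C 1 : ℤ[X]).map (Int.castRingHom ℚ)
      = (X ^ 6 - 3 * X ^ 2 - 1 : ℚ[X]) := by
    simp [Polynomial.map_sub, Polynomial.map_mul, Polynomial.map_pow]
  rwa [hmap] at this
end
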